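/- Let λ ∈ ℝ, q₁, q₂ : ℝ → ℝ continuous, and let F : ℝ → Matrix (Fin 2) (Fin 2) ℝ be differentiable with F'(x) = ![![λ, q₁(x)], ![q₂(x), −λ]] · F(x), with entries f₁₁, f₁₂, f₂₁, f₂₂. Fix A, B, C ∈ ℝ and an open interval I ⊆ ℝ on which P̃ := A·f₁₁² + B·f₁₁·f₁₂ + C·f₁₂² > 0 and Q̃ := A·f₂₁² + B·f₂₁·f₂₂ + C·f₂₂² > 0, and set f̃₁ := √P̃, f̃₂ := √Q̃, Φ := A·f₁₁·f₂₁ + (B/2)·(f₁₁·f₂₂ + f₁₂·f₂₁) + C·f₁₂·f₂₂, α := Φ − f̃₁·f̃₂. Then for any x₀, x ∈ I, α(x) = α(x₀) · exp( −∫_{x₀}^{x} ( q₁(t)·f̃₂(t)/f̃₁(t) + q₂(t)·f̃₁(t)/f̃₂(t) ) dt ); in particular α is determined on I by its value ᾱ := α(x₀) at a single point. -/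

import Mathlib

/-
Along the Dirac flow, `P̃' = 2λP̃ + 2q₁Φ`, `Q̃' = −2λQ̃ + 2q₂Φ` and `Φ' = q₁Q̃ + q₂P̃`.
Where `P̃, Q̃ > 0` this gives `f̃₁' = λf̃₁ + q₁Φ/f̃₁` and `f̃₂' = −λf̃₂ + q₂Φ/f̃₂`, and the
`λ`-terms cancel in `α' = Φ' − (f̃₁f̃₂)'`, leaving the linear equation
`α' = −g·α` with `g = q₁f̃₂/f̃₁ + q₂f̃₁/f̃₂`. Its solution is read off from the integrating factor:
`α·exp(∫ g)` has zero derivative on the interval.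
-/

/-- `P̃ = A·f₁₁² + B·f₁₁·f₁₂ + C·f₁₂²` built from the first row of `F`. -/
def diracP (A B C : ℝ) (F : ℝ → Matrix (Fin 2) (Fin 2) ℝ) (x : ℝ) : ℝ :=
  A * (F x 0 0) ^ 2 + B * (F x 0 0) * (F x 0 1) + C * (F x 0 1) ^ 2

/-- `Q̃ = A·f₂₁² + B·f₂₁·f₂₂ + C·f₂₂²` built from the second row of `F`. -/
def diracQ (A B C : ℝ) (F : ℝ → Matrix (Fin 2) (Fin 2) ℝ) (x : ℝ) : ℝ :=
  A * (F x 1 0) ^ 2 + B * (F x 1 0) * (F x 1 1) + C * (F x 1 1) ^ 2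

/-- Mixed combination `Φ = A·f₁₁·f₂₁ + (B/2)·(f₁₁·f₂₂ + f₁₂·f₂₁) + C·f₁₂·f₂₂`. -/
noncomputable def diracPhi (A B C : ℝ) (F : ℝ → Matrix (Fin 2) (Fin 2) ℝ) (x : ℝ) : ℝ :=
  A * (F x 0 0) * (F x 1 0) + (B / 2) * ((F x 0 0) * (F x 1 1) + (F x 0 1) * (F x 1 0)) +
    C * (F x 0 1) * (F x 1 1)

/-- First component `f̃₁ = √P̃` of the partial solution to the deformed Dirac equation. -/
noncomputable def diracFt₁ (A B C : ℝ) (F : ℝ → Matrix (Fin 2) (Fin 2) ℝ) (x : ℝ) : ℝ :=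
  Real.sqrt (diracP A B C F x)

/-- Second component `f̃₂ = √Q̃` of the partial solution to the deformed Dirac equation. -/
noncomputable def diracFt₂ (A B C : ℝ) (F : ℝ → Matrix (Fin 2) (Fin 2) ℝ) (x : ℝ) : ℝ :=
  Real.sqrt (diracQ A B C F x)

/-- Deformation coefficient `α = Φ − f̃₁·f̃₂`. -/
noncomputable def diracAlpha (A B C : ℝ) (F : ℝ → Matrix (Fin 2) (Fin 2) ℝ) (x : ℝ) : ℝ :=
  diracPhi A B C F x - diracFt₁ A B C F x * diracFt₂ A B C F x

open Real

theorem hasDerivAt_intervalIntegral_of_continuousOn {s : Set ℝ} (hs : IsOpen s)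
    (hs' : IsPreconnected s) {g : ℝ → ℝ} (hg : ContinuousOn g s) {x₀ y : ℝ}
    (hx₀ : x₀ ∈ s) (hy : y ∈ s) : HasDerivAt (fun z => ∫ t in x₀..z, g t) (g y) y :=
  intervalIntegral.integral_hasDerivAt_right
    (hg.mono (hs'.ordConnected.uIcc_subset hx₀ hy)).intervalIntegrable
    (hg.stronglyMeasurableAtFilter hs y hy) (hg.continuousAt (hs.mem_nhds hy))

theorem eq_mul_exp_neg_integral_of_hasDerivAt {s : Set ℝ} (hs : IsOpen s)
    (hs' : IsPreconnected s) {f g : ℝ → ℝ} (hg : ContinuousOn g s)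
    (hf : ∀ y ∈ s, HasDerivAt f (-g y * f y) y) {x₀ x : ℝ} (hx₀ : x₀ ∈ s) (hx : x ∈ s) :
    f x = f x₀ * exp (-∫ t in x₀..x, g t) := by
  set G : ℝ → ℝ := fun z => ∫ t in x₀..z, g t
  have hderiv : ∀ y ∈ s, HasDerivAt (fun z => f z * exp (G z)) 0 y := fun y hy =>
    ((hf y hy).mul (hasDerivAt_intervalIntegral_of_continuousOn hs hs' hg hx₀ hy).exp).congr_deriv
      (by ring)
  have hconst : f x * exp (G x) = f x₀ * exp (G x₀) :=
    hs.is_const_of_deriv_eq_zero hs'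
      (fun y hy => (hderiv y hy).differentiableAt.differentiableWithinAt)
      (fun y hy => (hderiv y hy).deriv) hx hx₀
  have hG₀ : G x₀ = 0 := intervalIntegral.integral_same
  rw [hG₀, exp_zero, mul_one] at hconst
  rw [exp_neg, ← hconst, mul_inv_cancel_right₀ (exp_ne_zero _)]

theorem HasDerivAt.sqrt_of_eq_two_mul {p : ℝ → ℝ} {c d x : ℝ}
    (hp : HasDerivAt p (2 * (c * p x + d)) x) (hx : 0 < p x) :
    HasDerivAt (fun t => √(p t)) (c * √(p x) + d / √(p x)) x := by
  refine (hp.sqrt hx.ne').congr_deriv ?_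
  have hne : √(p x) ≠ 0 := (sqrt_pos.2 hx).ne'
  field_simp
  rw [sq_sqrt hx.le]

noncomputable def diracAlphaRate (q₁ q₂ : ℝ → ℝ) (A B C : ℝ)
    (F : ℝ → Matrix (Fin 2) (Fin 2) ℝ) (t : ℝ) : ℝ :=
  q₁ t * diracFt₂ A B C F t / diracFt₁ A B C F t + q₂ t * diracFt₁ A B C F t / diracFt₂ A B C F t

section DiracFlow

variable {lam : ℝ} {q₁ q₂ : ℝ → ℝ} {F : ℝ → Matrix (Fin 2) (Fin 2) ℝ}
  (hF : ∀ (x : ℝ) (i j : Fin 2),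
    HasDerivAt (fun t => F t i j) ((!![lam, q₁ x; q₂ x, -lam] * F x) i j) x)
  (A B C : ℝ)
include hF

theorem hasDerivAt_dirac_entry_zero (x : ℝ) (j : Fin 2) :
    HasDerivAt (fun t => F t 0 j) (lam * F x 0 j + q₁ x * F x 1 j) x := by
  simpa [Matrix.mul_apply, Fin.sum_univ_two] using hF x 0 j

theorem hasDerivAt_dirac_entry_one (x : ℝ) (j : Fin 2) :
    HasDerivAt (fun t => F t 1 j) (q₂ x * F x 0 j - lam * F x 1 j) x := by
  simpa [Matrix.mul_apply, Fin.sum_univ_two, sub_eq_add_neg] using hF x 1 j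

theorem hasDerivAt_diracP (x : ℝ) :
    HasDerivAt (diracP A B C F) (2 * (lam * diracP A B C F x + q₁ x * diracPhi A B C F x)) x := by
  have h₀ := hasDerivAt_dirac_entry_zero hF x 0
  have h₁ := hasDerivAt_dirac_entry_zero hF x 1
  refine ((((h₀.pow 2).const_mul A).add ((h₀.const_mul B).mul h₁)).add
    ((h₁.pow 2).const_mul C)).congr_deriv ?_
  simp only [diracP, diracPhi]
  ring

theorem hasDerivAt_diracQ (x : ℝ) :
    HasDerivAt (diracQ A B C F) (2 * (-lam * diracQ A B C F x + q₂ x * diracPhi A B C F x)) x := by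
  have h₀ := hasDerivAt_dirac_entry_one hF x 0
  have h₁ := hasDerivAt_dirac_entry_one hF x 1
  refine ((((h₀.pow 2).const_mul A).add ((h₀.const_mul B).mul h₁)).add
    ((h₁.pow 2).const_mul C)).congr_deriv ?_
  simp only [diracQ, diracPhi]
  ring

theorem hasDerivAt_diracPhi (x : ℝ) :
    HasDerivAt (diracPhi A B C F) (q₁ x * diracQ A B C F x + q₂ x * diracP A B C F x) x := by
  have h₀₀ := hasDerivAt_dirac_entry_zero hF x 0
  have h₀₁ := hasDerivAt_dirac_entry_zero hF x 1
  have h₁₀ := hasDerivAt_dirac_entry_one hF x 0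
  have h₁₁ := hasDerivAt_dirac_entry_one hF x 1
  refine ((((h₀₀.const_mul A).mul h₁₀).add
    (((h₀₀.mul h₁₁).add (h₀₁.mul h₁₀)).const_mul (B / 2))).add
    ((h₀₁.const_mul C).mul h₁₁)).congr_deriv ?_
  simp only [diracP, diracQ]
  ring

theorem hasDerivAt_diracFt₁ {x : ℝ} (hPx : 0 < diracP A B C F x) :
    HasDerivAt (diracFt₁ A B C F)
      (lam * diracFt₁ A B C F x + q₁ x * diracPhi A B C F x / diracFt₁ A B C F x) x :=
  (hasDerivAt_diracP hF A B C x).sqrt_of_eq_two_mul hPx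

theorem hasDerivAt_diracFt₂ {x : ℝ} (hQx : 0 < diracQ A B C F x) :
    HasDerivAt (diracFt₂ A B C F)
      (-lam * diracFt₂ A B C F x + q₂ x * diracPhi A B C F x / diracFt₂ A B C F x) x :=
  (hasDerivAt_diracQ hF A B C x).sqrt_of_eq_two_mul hQx

theorem hasDerivAt_diracAlpha {x : ℝ} (hPx : 0 < diracP A B C F x) (hQx : 0 < diracQ A B C F x) :
    HasDerivAt (diracAlpha A B C F) (-diracAlphaRate q₁ q₂ A B C F x * diracAlpha A B C F x) x := by
  have hsq₁ : diracFt₁ A B C F x ^ 2 = diracP A B C F x := sq_sqrt hPx.le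
  have hsq₂ : diracFt₂ A B C F x ^ 2 = diracQ A B C F x := sq_sqrt hQx.le
  have h₁ : diracFt₁ A B C F x ≠ 0 := (sqrt_pos.2 hPx).ne'
  have h₂ : diracFt₂ A B C F x ≠ 0 := (sqrt_pos.2 hQx).ne'
  refine ((hasDerivAt_diracPhi hF A B C x).sub
    ((hasDerivAt_diracFt₁ hF A B C hPx).mul (hasDerivAt_diracFt₂ hF A B C hQx))).congr_deriv ?_
  simp only [diracAlphaRate, diracAlpha]
  rw [← hsq₁, ← hsq₂]
  field_simp
  ring

theorem continuousOn_diracAlphaRate (hq₁ : Continuous q₁) (hq₂ : Continuous q₂) {s : Set ℝ}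
    (hP : ∀ x ∈ s, 0 < diracP A B C F x) (hQ : ∀ x ∈ s, 0 < diracQ A B C F x) :
    ContinuousOn (diracAlphaRate q₁ q₂ A B C F) s := by
  have hP_cont : Continuous (diracP A B C F) :=
    continuous_iff_continuousAt.2 fun x => (hasDerivAt_diracP hF A B C x).continuousAt
  have hQ_cont : Continuous (diracQ A B C F) :=
    continuous_iff_continuousAt.2 fun x => (hasDerivAt_diracQ hF A B C x).continuousAt
  have hFt₁ : ContinuousOn (diracFt₁ A B C F) s := hP_cont.sqrt.continuousOn
  have hFt₂ : ContinuousOn (diracFt₂ A B C F) s := hQ_cont.sqrt.continuousOn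
  exact ((hq₁.continuousOn.mul hFt₂).div hFt₁ fun x hx => (sqrt_pos.2 (hP x hx)).ne').add
    ((hq₂.continuousOn.mul hFt₁).div hFt₂ fun x hx => (sqrt_pos.2 (hQ x hx)).ne')

end DiracFlow

/-- On an open interval where `P̃ > 0` and `Q̃ > 0`, the deformation
coefficient `α = Φ − f̃₁·f̃₂` satisfies
`α(x) = α(x₀)·exp(−∫_{x₀}^{x} (q₁·f̃₂/f̃₁ + q₂·f̃₁/f̃₂))`; in particular `α` is
determined on the interval by its value at a single point. -/
theorem deformed_dirac_alpha_exponential_formula (lam : ℝ) (q₁ q₂ : ℝ → ℝ)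
    (hq₁ : Continuous q₁) (hq₂ : Continuous q₂)
    (F : ℝ → Matrix (Fin 2) (Fin 2) ℝ)
    (hF : ∀ (x : ℝ) (i j : Fin 2),
      HasDerivAt (fun t => F t i j) ((!![lam, q₁ x; q₂ x, -lam] * F x) i j) x)
    (A B C : ℝ) (a b : ℝ)
    (hP : ∀ x ∈ Set.Ioo a b, 0 < diracP A B C F x)
    (hQ : ∀ x ∈ Set.Ioo a b, 0 < diracQ A B C F x) :
    ∀ x₀ ∈ Set.Ioo a b, ∀ x ∈ Set.Ioo a b,
      diracAlpha A B C F x = diracAlpha A B C F x₀ *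
        Real.exp (-(∫ t in x₀..x,
          (q₁ t * diracFt₂ A B C F t / diracFt₁ A B C F t +
           q₂ t * diracFt₁ A B C F t / diracFt₂ A B C F t))) := fun _ hx₀ _ hx =>
  eq_mul_exp_neg_integral_of_hasDerivAt isOpen_Ioo isPreconnected_Ioo
    (continuousOn_diracAlphaRate hF A B C hq₁ hq₂ hP hQ)
    (fun _ hy => hasDerivAt_diracAlpha hF A B C (hP _ hy) (hQ _ hy)) hx₀ hx
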